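/- arXiv:1403.0876 — 2 statements merged into one kernel-verified Lean document; each statement's English description precedes it below -/
import Mathlib

section
/- Let C be an F-linear additive rigid symmetric monoidal category over a field F. For objects a, b of C, define ⊗_nil(a,b) = { f ∈ Hom_C(a,b) | f^{⊗n} = 0 for some n > 0 }, where f^{⊗n} : a^{⊗n} → b^{⊗n} is the n-fold tensor power of f. Then ⊗_nil(a,b) is an additive subgroup of Hom_C(a,b) for all a, b. -/
/-!
Expanding `(f + g)^{⊗N}` by distributivity gives a sum of tensor words in `f` and `g`; using
the braiding, each word is conjugate to `f^{⊗i} ⊗ g^{⊗j}` with `i + j = N`. For `N = m + n`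
either `i ≥ m` or `j ≥ n`, so if `f^{⊗m} = 0` and `g^{⊗n} = 0` every word vanishes. Closure
under negation is simpler: `(-f)^{⊗n} = f^{⊗n} ≫ (-𝟙)^{⊗n}`.
-/

open CategoryTheory MonoidalCategory

universe u v

noncomputable section

variable {C : Type u} [Category.{v} C] [MonoidalCategory C]

/-- The `n`-fold tensor power of an object. -/
def tpowObj (a : C) : ℕ → C
  | 0 => 𝟙_ C
  | n + 1 => tpowObj a n ⊗ a

/-- The `n`-fold tensor power of a morphism. -/
def tpowHom {a b : C} (f : a ⟶ b) : (n : ℕ) → (tpowObj a n ⟶ tpowObj b n)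
  | 0 => 𝟙 _
  | n + 1 => tpowHom f n ⊗ₘ f

lemma tpowHom_comp {a b c : C} (f : a ⟶ b) (g : b ⟶ c) :
    ∀ n, tpowHom (f ≫ g) n = tpowHom f n ≫ tpowHom g n
  | 0 => (Category.comp_id _).symm
  | n + 1 => by
    simp only [tpowHom, tpowHom_comp f g n]
    exact (tensorHom_comp_tensorHom _ _ _ _).symm

lemma comp_comp_tensorHom {x y z t a b : C} (u : x ⟶ y) (h : y ⟶ z) (w : z ⟶ t) (f : a ⟶ b) :
    (u ≫ h ≫ w) ⊗ₘ f = u ▷ a ≫ (h ⊗ₘ f) ≫ w ▷ b := by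
  simp only [← tensorHom_id, tensorHom_comp_tensorHom, Category.id_comp, Category.comp_id]

section Braided

variable [BraidedCategory C]

def swapRightIso (x y z : C) : (x ⊗ y) ⊗ z ≅ (x ⊗ z) ⊗ y :=
  α_ x y z ≪≫ whiskerLeftIso x (β_ y z) ≪≫ (α_ x z y).symm

lemma tensorHom_tensorHom_swap {x₁ x₂ y₁ y₂ z₁ z₂ : C} (F : x₁ ⟶ x₂) (G : y₁ ⟶ y₂)
    (h : z₁ ⟶ z₂) :
    (F ⊗ₘ G) ⊗ₘ h =
      (swapRightIso x₁ y₁ z₁).hom ≫ ((F ⊗ₘ h) ⊗ₘ G) ≫ (swapRightIso x₂ y₂ z₂).inv := by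
  rw [← Category.assoc, Iso.eq_comp_inv]
  simp only [swapRightIso, associator_conjugation, Iso.trans_hom, whiskerLeftIso_hom,
    Iso.symm_hom, Category.assoc, Iso.inv_hom_id_assoc, Iso.cancel_iso_hom_left,
    Iso.cancel_iso_inv_right_assoc]
  rw [← id_tensorHom, ← id_tensorHom, tensorHom_comp_tensorHom, tensorHom_comp_tensorHom,
    BraidedCategory.braiding_naturality, Category.id_comp, Category.comp_id]

end Braided

section Preadditive

variable [Preadditive C]

lemma tpowHom_neg_eq_zero {a b : C} {f : a ⟶ b} {n : ℕ} (hf : tpowHom f n = 0) :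
    tpowHom (-f) n = 0 := by
  rw [← Category.comp_id f, ← Preadditive.comp_neg, tpowHom_comp, hf, Limits.zero_comp]

variable [MonoidalPreadditive C]

lemma tpowHom_eq_zero_of_le {a b : C} {f : a ⟶ b} {m n : ℕ} (hf : tpowHom f m = 0)
    (hmn : m ≤ n) : tpowHom f n = 0 := by
  induction n, hmn using Nat.le_induction with
  | base => exact hf
  | succ n _ ih => exact (congrArg (· ⊗ₘ f) ih).trans (MonoidalPreadditive.zero_tensor f)

def tensorHomRightAddHom {x y a b : C} (f : a ⟶ b) : (x ⟶ y) →+ (x ⊗ a ⟶ y ⊗ b) :=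
  AddMonoidHom.mk' (· ⊗ₘ f) fun _ _ => MonoidalPreadditive.add_tensor _ _ _

/-- Each term of the binomial expansion of `(f + g)^{⊗N}` has this form, by the braiding. -/
def mixedTensorPowers {a b : C} (f g : a ⟶ b) (N : ℕ) : Set (tpowObj a N ⟶ tpowObj b N) :=
  {h | ∃ (i j : ℕ) (u : tpowObj a N ⟶ tpowObj a i ⊗ tpowObj a j)
    (w : tpowObj b i ⊗ tpowObj b j ⟶ tpowObj b N),
    i + j = N ∧ h = u ≫ (tpowHom f i ⊗ₘ tpowHom g j) ≫ w}

lemma mixedTensorPowers_add_subset_zero {a b : C} {f g : a ⟶ b} {m n : ℕ}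
    (hf : tpowHom f m = 0) (hg : tpowHom g n = 0) :
    mixedTensorPowers f g (m + n) ⊆ {0} := by
  rintro _ ⟨i, j, u, w, hij, rfl⟩
  rw [Set.mem_singleton_iff]
  rcases le_or_gt m i with hi | hi
  · rw [tpowHom_eq_zero_of_le hf hi, MonoidalPreadditive.zero_tensor, Limits.zero_comp,
      Limits.comp_zero]
  · rw [tpowHom_eq_zero_of_le hg (by omega), MonoidalPreadditive.tensor_zero, Limits.zero_comp,
      Limits.comp_zero]

lemma tensorHomRightAddHom_snd_image_subset {a b : C} (f g : a ⟶ b) (N : ℕ) :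
    tensorHomRightAddHom g '' mixedTensorPowers f g N ⊆ mixedTensorPowers f g (N + 1) := by
  rintro _ ⟨_, ⟨i, j, u, w, rfl, rfl⟩, rfl⟩
  refine ⟨i, j + 1, u ▷ a ≫ (α_ _ _ _).hom, (α_ _ _ _).inv ≫ w ▷ b, by omega, ?_⟩
  rw [tensorHomRightAddHom, AddMonoidHom.mk'_apply, comp_comp_tensorHom, associator_conjugation]
  simp only [Category.assoc]
  exact (Category.assoc _ _ _).symm

variable [BraidedCategory C]

lemma tensorHomRightAddHom_fst_image_subset {a b : C} (f g : a ⟶ b) (N : ℕ) :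
    tensorHomRightAddHom f '' mixedTensorPowers f g N ⊆ mixedTensorPowers f g (N + 1) := by
  rintro _ ⟨_, ⟨i, j, u, w, rfl, rfl⟩, rfl⟩
  refine ⟨i + 1, j, u ▷ a ≫ (swapRightIso _ _ _).hom, (swapRightIso _ _ _).inv ≫ w ▷ b,
    by omega, ?_⟩
  rw [tensorHomRightAddHom, AddMonoidHom.mk'_apply, comp_comp_tensorHom, tensorHom_tensorHom_swap]
  simp only [Category.assoc]
  exact (Category.assoc _ _ _).symm

lemma tpowHom_add_mem_closure {a b : C} (f g : a ⟶ b) :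
    ∀ N, tpowHom (f + g) N ∈ AddSubgroup.closure (mixedTensorPowers f g N)
  | 0 => AddSubgroup.subset_closure
      ⟨0, 0, (λ_ _).inv, (λ_ _).hom, rfl, by simp [tpowHom, tpowObj]⟩
  | N + 1 => by
    have hexpand : tpowHom (f + g) (N + 1) = tensorHomRightAddHom f (tpowHom (f + g) N) +
        tensorHomRightAddHom g (tpowHom (f + g) N) :=
      MonoidalPreadditive.tensor_add _ _ _
    have hmap (φ : (tpowObj a N ⟶ tpowObj b N) →+ (tpowObj a (N + 1) ⟶ tpowObj b (N + 1))) :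
        φ (tpowHom (f + g) N) ∈ AddSubgroup.closure (φ '' mixedTensorPowers f g N) :=
      AddMonoidHom.map_closure φ _ ▸ AddSubgroup.mem_map_of_mem φ (tpowHom_add_mem_closure f g N)
    rw [hexpand]
    exact add_mem
      (AddSubgroup.closure_mono (tensorHomRightAddHom_fst_image_subset f g N) (hmap _))
      (AddSubgroup.closure_mono (tensorHomRightAddHom_snd_image_subset f g N) (hmap _))

lemma tpowHom_add_eq_zero {a b : C} {f g : a ⟶ b} {m n : ℕ} (hf : tpowHom f m = 0)
    (hg : tpowHom g n = 0) : tpowHom (f + g) (m + n) = 0 := by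
  have h := tpowHom_add_mem_closure f g (m + n)
  rwa [AddSubgroup.closure_eq_bot_iff.mpr (mixedTensorPowers_add_subset_zero hf hg),
    AddSubgroup.mem_bot] at h

def smashNilpotent (a b : C) : AddSubgroup (a ⟶ b) where
  carrier := {f | ∃ n > 0, tpowHom f n = 0}
  zero_mem' := ⟨1, one_pos, MonoidalPreadditive.tensor_zero _⟩
  add_mem' := by
    rintro f g ⟨m, hm, hf⟩ ⟨n, -, hg⟩
    exact ⟨m + n, by omega, tpowHom_add_eq_zero hf hg⟩
  neg_mem' := by
    rintro f ⟨n, hn, hf⟩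
    exact ⟨n, hn, tpowHom_neg_eq_zero hf⟩

end Preadditive

theorem smashNil_isAddSubgroup_general [Preadditive C] [MonoidalPreadditive C] [SymmetricCategory C]
    (a b : C) :
    ∃ S : AddSubgroup (a ⟶ b),
      (S : Set (a ⟶ b)) = {f : a ⟶ b | ∃ n > 0, tpowHom f n = 0} :=
  ⟨smashNilpotent a b, rfl⟩

/-- in an `F`-linear additive rigid symmetric monoidal category, the
smash-nilpotent morphisms form an additive subgroup of each Hom-group. -/
theorem smashNil_isAddSubgroup (F : Type*) [Field F] [Preadditive C] [Linear F C]
    [MonoidalPreadditive C] [MonoidalLinear F C] [SymmetricCategory C] [RigidCategory C]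
    [Limits.HasFiniteBiproducts C] (a b : C) :
    ∃ S : AddSubgroup (a ⟶ b),
      (S : Set (a ⟶ b)) = {f : a ⟶ b | ∃ n > 0, tpowHom f n = 0} :=
  smashNil_isAddSubgroup_general a b

end
end

section
/- Let C be an idempotent complete additive category and I an ideal of C such that I(a,a) is a nilpotent ideal of End_C(a) for every object a. Then the quotient category C/I is idempotent complete. -/
/-!
Modulo `I`, an idempotent of `C/I` at `X` is an element `e ∈ End X` with `e² - e ∈ I(X,X)`.
Since `I(X,X)` is a nil ideal, idempotents lift along `End X → End X ⧸ I(X,X)`, so `e` is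
congruent modulo `I` to a genuine idempotent of `End X`; this one splits in `C`, and its
splitting is a splitting of `e` in `C/I`.
-/

open CategoryTheory

universe u v

/-- A (categorical) ideal of a preadditive category: an additive subgroup of each
Hom-group, closed under composition with arbitrary morphisms on either side. -/
structure CatIdeal (C : Type u) [Category.{v} C] [Preadditive C] where
  I : ∀ a b : C, AddSubgroup (a ⟶ b)
  comp_mem_left : ∀ {a b c : C} (f : a ⟶ b), f ∈ I a b → ∀ g : b ⟶ c, f ≫ g ∈ I a c
  comp_mem_right : ∀ {a b c : C} (g : b ⟶ c), g ∈ I b c → ∀ f : a ⟶ b, f ≫ g ∈ I a c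

/-- The ideal `I(a,a) ⊆ End(a)` is nilpotent. -/
def CatIdeal.EndNilpotent {C : Type u} [Category.{v} C] [Preadditive C]
    (J : CatIdeal C) (a : C) : Prop :=
  ∃ N > 0, ∀ l : List (a ⟶ a), l.length = N →
    (∀ f ∈ l, f ∈ J.I a a) → l.foldr (· ≫ ·) (𝟙 a) = 0

theorem TwoSidedIdeal.exists_isIdempotentElem_sub_mem {R : Type*} [Ring R] (I : TwoSidedIdeal R)
    (hI : ∀ x ∈ I, IsNilpotent x) {x : R} (hx : x * x - x ∈ I) :
    ∃ e : R, IsIdempotentElem e ∧ e - x ∈ I := by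
  have hker : ∀ y ∈ RingHom.ker I.ringCon.mk', IsNilpotent y := fun y hy =>
    hI y (by rwa [RingHom.mem_ker, ← TwoSidedIdeal.mem_ker, ker_ringCon_mk'] at hy)
  have hidem : IsIdempotentElem (I.ringCon.mk' x) := by
    rw [IsIdempotentElem, ← map_mul]
    exact I.ringCon.eq.mpr ((I.rel_iff _ _).mpr hx)
  obtain ⟨e, he, hex⟩ := exists_isIdempotentElem_eq_of_ker_isNilpotent _ hker _ ⟨x, rfl⟩ hidem
  exact ⟨e, he, (I.rel_iff e x).mp (I.ringCon.eq.mp hex)⟩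

lemma CategoryTheory.End.pow_eq_foldr_replicate {C : Type*} [Category C] {X : C} (f : End X)
    (n : ℕ) : f ^ n = (List.replicate n f).foldr (· ≫ ·) (𝟙 X) := by
  induction n with
  | zero => rfl
  | succ n ih => rw [List.replicate_succ, List.foldr_cons, ← ih, pow_succ]; rfl

namespace CatIdeal

variable {C : Type*} [Category C] [Preadditive C] (J : CatIdeal C)

def endIdeal (X : C) : TwoSidedIdeal (End X) :=
  .mk' (J.I X X : Set (X ⟶ X)) (J.I X X).zero_mem (J.I X X).add_mem (J.I X X).neg_mem
    (fun hy => J.comp_mem_left _ hy _) (fun hx => J.comp_mem_right _ hx _)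

lemma mem_endIdeal {X : C} {f : End X} : f ∈ J.endIdeal X ↔ f ∈ J.I X X :=
  TwoSidedIdeal.mem_mk' ..

variable {J}

lemma EndNilpotent.isNilpotent {X : C} (h : J.EndNilpotent X) {f : End X} (hf : f ∈ J.I X X) :
    IsNilpotent f := by
  obtain ⟨N, -, hN⟩ := h
  exact ⟨N, (End.pow_eq_foldr_replicate f N).trans <| hN _ List.length_replicate
    fun g hg => List.eq_of_mem_replicate hg ▸ hf⟩

lemma EndNilpotent.exists_idem_sub_mem {X : C} (hX : J.EndNilpotent X) {e : X ⟶ X}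
    (he : e ≫ e - e ∈ J.I X X) : ∃ e' : X ⟶ X, e' ≫ e' = e' ∧ e' - e ∈ J.I X X := by
  obtain ⟨e', he', he'e⟩ := (J.endIdeal X).exists_isIdempotentElem_sub_mem
    (fun f hf => hX.isNilpotent (J.mem_endIdeal.mp hf)) (x := e) (J.mem_endIdeal.mpr he)
  exact ⟨e', he'.eq, J.mem_endIdeal.mp he'e⟩

end CatIdeal

/-- if `C` is idempotent complete and every `I(a,a)` is nilpotent,
then the quotient category `C/I` is idempotent complete: every morphism `e`
which is idempotent modulo `I` splits in `C/I`. -/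
theorem quotient_by_nilpotent_ideal_idempotentComplete {C : Type u} [Category.{v} C]
    [Preadditive C] [IsIdempotentComplete C]
    (J : CatIdeal C) (hnil : ∀ a : C, J.EndNilpotent a)
    {X : C} (e : X ⟶ X) (he : e ≫ e - e ∈ J.I X X) :
    ∃ (Y : C) (p : X ⟶ Y) (i : Y ⟶ X),
      i ≫ p - 𝟙 Y ∈ J.I Y Y ∧ p ≫ i - e ∈ J.I X X := by
  obtain ⟨e', he', he'e⟩ := (hnil X).exists_idem_sub_mem he
  obtain ⟨Y, i, p, hip, hpi⟩ := IsIdempotentComplete.idempotents_split X e' he'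
  refine ⟨Y, p, i, ?_, hpi ▸ he'e⟩
  rw [hip, sub_self]
  exact (J.I Y Y).zero_mem
end
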